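/- arXiv:1405.3792 — 5 statements merged into one kernel-verified Lean document; each statement's English description precedes it below -/
import Mathlib

section
/- Let A, B be basic models, f : A → B a function, β < κ an ordinal, and F ⊆ (f]_β a set of functions each of which is α-monotonic for every α < κ. Then ⊔_β F (computed pointwise) is α-monotonic for every α < κ. -/
/-- A *basic model*: a complete lattice `L` equipped with preorders `sq α` (written `⊑_α`)
for each ordinal `α < κ`, together with the relative least-upper-bound operation `lub α X`
(written `⊔_α X`), satisfying the four basic-model axioms. -/
structure BasicModel (L : Type*) [CompleteLattice L] (κ : Ordinal) where
  sq : Ordinal → L → L → Prop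
  lub : Ordinal → Set L → L
  sq_refl : ∀ {α : Ordinal}, α < κ → ∀ x, sq α x x
  sq_trans : ∀ {α : Ordinal}, α < κ → ∀ {x y z : L}, sq α x y → sq α y z → sq α x z
  ax1 : ∀ {α β : Ordinal}, α < β → β < κ → ∀ {x y : L}, sq β x y → sq α x y ∧ sq α y x
  ax2 : ∀ {x y : L}, (∀ α, α < κ → sq α x y ∧ sq α y x) → x = y
  ax3_ub : ∀ {α : Ordinal}, α < κ → ∀ (x : L) (X : Set L),
      X ⊆ {y | ∀ β < α, sq β x y ∧ sq β y x} → ∀ z ∈ X, sq α z (lub α X)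
  ax3_least : ∀ {α : Ordinal}, α < κ → ∀ (x : L) (X : Set L),
      X ⊆ {y | ∀ β < α, sq β x y ∧ sq β y x} →
      ∀ z : L, (∀ β < α, sq β x z ∧ sq β z x) → (∀ w ∈ X, sq α w z) →
        sq α (lub α X) z ∧ lub α X ≤ z
  ax4 : ∀ {α : Ordinal}, α < κ → ∀ (S : Set (L × L)), (∀ p ∈ S, sq α p.1 p.2) →
      sq α (sSup (Prod.fst '' S)) (sSup (Prod.snd '' S))

namespace BasicModel

variable {L : Type*} [CompleteLattice L] {κ : Ordinal}

/-- `x =_α y`. -/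
def eqAt (B : BasicModel L κ) (α : Ordinal) (x y : L) : Prop :=
  B.sq α x y ∧ B.sq α y x

/-- The set `(x]_α = {y | ∀ β < α, x =_β y}`. -/
def cone (B : BasicModel L κ) (α : Ordinal) (x : L) : Set L :=
  {y | ∀ β < α, B.eqAt β x y}

/-- The α-restriction `x|_α = ⊔_α {x}`. -/
def restrict (B : BasicModel L κ) (α : Ordinal) (x : L) : L :=
  B.lub α {x}

/-- `x ⊏_α y`: `x ⊑_α y` but not `x =_α y`. -/
def ltAt (B : BasicModel L κ) (α : Ordinal) (x y : L) : Prop :=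
  B.sq α x y ∧ ¬ B.eqAt α x y

/-- The global relation `⊑`: `x ⊑ y` iff `x = y` or `x ⊏_α y` for some `α < κ`. -/
def sqle (B : BasicModel L κ) (x y : L) : Prop :=
  x = y ∨ ∃ α < κ, B.ltAt α x y

/-- `g : A → B` is α-monotonic. -/
def MonotonicAt {A B : Type*} [CompleteLattice A] [CompleteLattice B]
    (BA : BasicModel A κ) (BB : BasicModel B κ) (α : Ordinal) (g : A → B) : Prop :=
  ∀ x y : A, BA.sq α x y → BB.sq α (g x) (g y)

end BasicModel

/-! Compare the bounds at `x` and `y` according to the position of `α` relative to `β`. For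
`α < β` each bound is `α`-equal to any of its members. For `α = β` the bound at `y` lies in the cone
of the values at `x` and dominates them, so it dominates their least bound. For `β < α` the members
at `x` and `y` are pairwise `β`-equal, which forces the two bounds to coincide. -/

namespace BasicModel

variable {L : Type*} [CompleteLattice L] {κ : Ordinal} (B : BasicModel L κ)
  {ι : Type*} {S : Set ι} {u v : ι → L} {a b : L} {α β : Ordinal}

theorem eqAt_trans (hα : α < κ) {x y z : L} (hxy : B.eqAt α x y) (hyz : B.eqAt α y z) :
    B.eqAt α x z :=
  ⟨B.sq_trans hα hxy.1 hyz.1, B.sq_trans hα hyz.2 hxy.2⟩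

theorem eqAt_of_sq (hαβ : α < β) (hβ : β < κ) {x y : L} (h : B.sq β x y) : B.eqAt α x y :=
  B.ax1 hαβ hβ h

theorem sq_lub_of_mem (hβ : β < κ) {X : Set L} (hX : X ⊆ B.cone β a) {z : L} (hz : z ∈ X) :
    B.sq β z (B.lub β X) :=
  B.ax3_ub hβ a X hX z hz

theorem lub_mem_cone_of_mem (hβ : β < κ) {X : Set L} (hX : X ⊆ B.cone β a) {z : L}
    (hz : z ∈ X) : B.lub β X ∈ B.cone β z :=
  fun _ hγ => B.eqAt_of_sq hγ hβ (B.sq_lub_of_mem hβ hX hz)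

theorem sq_lub_image_and_le (hβ : β < κ) (hu : ∀ i ∈ S, u i ∈ B.cone β a)
    (hv : ∀ i ∈ S, v i ∈ B.cone β b) (huv : ∀ i ∈ S, B.sq β (u i) (v i)) :
    B.sq β (B.lub β (u '' S)) (B.lub β (v '' S)) ∧ B.lub β (u '' S) ≤ B.lub β (v '' S) := by
  rcases S.eq_empty_or_nonempty with rfl | ⟨i, hi⟩
  · simp only [Set.image_empty]
    exact ⟨B.sq_refl hβ _, le_rfl⟩
  have hV : v '' S ⊆ B.cone β b := Set.image_subset_iff.2 hv
  refine B.ax3_least hβ a _ (Set.image_subset_iff.2 hu) _ (fun γ hγ => ?_) ?_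
  · have hγκ : γ < κ := hγ.trans hβ
    exact B.eqAt_trans hγκ (hu i hi γ hγ) <| B.eqAt_trans hγκ (B.eqAt_of_sq hγ hβ (huv i hi))
      (B.lub_mem_cone_of_mem hβ hV (Set.mem_image_of_mem v hi) γ hγ)
  · rintro _ ⟨j, hj, rfl⟩
    exact B.sq_trans hβ (huv j hj) (B.sq_lub_of_mem hβ hV (Set.mem_image_of_mem v hj))

theorem lub_image_eq (hβ : β < κ) (hu : ∀ i ∈ S, u i ∈ B.cone β a)
    (hv : ∀ i ∈ S, v i ∈ B.cone β b) (huv : ∀ i ∈ S, B.eqAt β (u i) (v i)) :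
    B.lub β (u '' S) = B.lub β (v '' S) :=
  le_antisymm (B.sq_lub_image_and_le hβ hu hv fun i hi => (huv i hi).1).2
    (B.sq_lub_image_and_le hβ hv hu fun i hi => (huv i hi).2).2

theorem sq_lub_image_of_lt (hαβ : α < β) (hβ : β < κ) (hu : ∀ i ∈ S, u i ∈ B.cone β a)
    (hv : ∀ i ∈ S, v i ∈ B.cone β b) (huv : ∀ i ∈ S, B.sq α (u i) (v i)) :
    B.sq α (B.lub β (u '' S)) (B.lub β (v '' S)) := by
  have hα : α < κ := hαβ.trans hβ
  rcases S.eq_empty_or_nonempty with rfl | ⟨i, hi⟩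
  · simp only [Set.image_empty]
    exact B.sq_refl hα _
  have hui := B.eqAt_of_sq hαβ hβ
    (B.sq_lub_of_mem hβ (Set.image_subset_iff.2 hu) (Set.mem_image_of_mem u hi))
  have hvi := B.eqAt_of_sq hαβ hβ
    (B.sq_lub_of_mem hβ (Set.image_subset_iff.2 hv) (Set.mem_image_of_mem v hi))
  exact B.sq_trans hα hui.2 (B.sq_trans hα (huv i hi) hvi.1)

theorem sq_lub_image (hα : α < κ) (hβ : β < κ) (hu : ∀ i ∈ S, u i ∈ B.cone β a)
    (hv : ∀ i ∈ S, v i ∈ B.cone β b) (huv : ∀ i ∈ S, B.sq α (u i) (v i)) :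
    B.sq α (B.lub β (u '' S)) (B.lub β (v '' S)) := by
  rcases lt_trichotomy α β with h | rfl | h
  · exact B.sq_lub_image_of_lt h hβ hu hv huv
  · exact (B.sq_lub_image_and_le hβ hu hv huv).1
  · rw [B.lub_image_eq hβ hu hv fun i hi => B.eqAt_of_sq h hα (huv i hi)]
    exact B.sq_refl hα _

end BasicModel

open BasicModel in
/-- if `F ⊆ (f]_β` is a set of functions that are α-monotonic for all `α < κ`,
then the pointwise `⊔_β F` is α-monotonic for all `α < κ`. -/
theorem stmt_2 {A B : Type*} [CompleteLattice A] [CompleteLattice B] {κ : Ordinal}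
    (BA : BasicModel A κ) (BB : BasicModel B κ) {β : Ordinal} (hβ : β < κ)
    (f : A → B) (F : Set (A → B))
    (hmono : ∀ g ∈ F, ∀ α < κ, MonotonicAt BA BB α g)
    (hcone : ∀ g ∈ F, ∀ x : A, ∀ γ < β, BB.eqAt γ (f x) (g x)) :
    ∀ α < κ, MonotonicAt BA BB α (fun x => BB.lub β ((fun g => g x) '' F)) := by
  intro α hα x y hxy
  exact BB.sq_lub_image hα hβ (fun g hg => hcone g hg x) (fun g hg => hcone g hg y)
    fun g hg => hmono g hg α hα x y hxy
end

section
/- If A and B are basic models, then the set [A →m B] of functions from A to B that are α-monotonic for all α < κ, equipped with the pointwise order ≤ and pointwise preorders ⊑_α, is itself a basic model. -/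
/-!
Functions `Z → L` into a basic model form a basic model under the pointwise relations and the
pointwise relative suprema `(⊔_α X) a = ⊔_α {f a | f ∈ X}`, and a subset closed under `⋁` and
under `⊔_α` of families inside a cone `(x]_α` of one of its elements is again a basic model.
For `[A →m B]`, closure under `⋁` is axiom (4). For `X ⊆ (x]_α` and `a ⊑_β b`:
if `β < α`, then `(⊔_α X) a =_β x a ⊑_β x b =_β (⊔_α X) b`, since relative suprema stay in
the cone; if `β = α`, then `x a =_γ x b` for all `γ < α`, so `(⊔_α X) b` is an `α`-upper bound
of `{f a | f ∈ X}` in the cone of `x a` and hence lies `⊒_α` its least one; if `β > α`, then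
`a =_α b` and this argument in both directions gives `(⊔_α X) a = (⊔_α X) b`.
-/

open Set Function

abbrev Subtype.completeLatticeOfSSupClosed {L : Type*} [CompleteLattice L] {p : L → Prop}
    (hsup : ∀ s : Set L, (∀ x ∈ s, p x) → p (sSup s)) : CompleteLattice {x // p x} :=
  letI : SupSet {x // p x} :=
    ⟨fun s => ⟨sSup (Subtype.val '' s), hsup _ (by rintro _ ⟨x, -, rfl⟩; exact x.2)⟩⟩
  completeLatticeOfSup _ fun s =>
    ⟨fun x hx => show x.1 ≤ sSup (Subtype.val '' s) from le_sSup (mem_image_of_mem _ hx),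
      fun y hy => show sSup (Subtype.val '' s) ≤ y.1 from
        sSup_le (by rintro _ ⟨x, hx, rfl⟩; exact hy hx)⟩

namespace BasicModel

section Cone

variable {L : Type*} [CompleteLattice L] {κ : Ordinal} (M : BasicModel L κ)
  {α : Ordinal} {x y z : L} {X Y : Set L}

theorem mem_cone_symm (h : y ∈ M.cone α x) : x ∈ M.cone α y :=
  fun β hβ => (h β hβ).symm

theorem mem_cone_trans (hα : α ≤ κ) (hxy : y ∈ M.cone α x) (hyz : z ∈ M.cone α y) :
    z ∈ M.cone α x := fun β hβ =>
  ⟨M.sq_trans (hβ.trans_le hα) (hxy β hβ).1 (hyz β hβ).1,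
    M.sq_trans (hβ.trans_le hα) (hyz β hβ).2 (hxy β hβ).2⟩

theorem mem_cone_of_sq (hα : α < κ) (h : M.sq α x y) : y ∈ M.cone α x :=
  fun _ hβ => M.ax1 hβ hα h

theorem lub_mem_cone (hα : α < κ) (hX : X ⊆ M.cone α x) : M.lub α X ∈ M.cone α x := by
  rcases X.eq_empty_or_nonempty with rfl | ⟨w, hw⟩
  · have hx : x ∈ M.cone α x := fun β hβ => ⟨M.sq_refl (hβ.trans hα) x, M.sq_refl (hβ.trans hα) x⟩
    exact M.mem_cone_symm
      (M.mem_cone_of_sq hα (M.ax3_least hα x ∅ hX x hx (fun _ h => h.elim)).1)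
  · exact M.mem_cone_trans hα.le (hX hw) (M.mem_cone_of_sq hα (M.ax3_ub hα x X hX w hw))

theorem lub_sq_lub (hα : α < κ) (hX : X ⊆ M.cone α x) (hY : Y ⊆ M.cone α y)
    (hxy : y ∈ M.cone α x) (h : ∀ w ∈ X, ∃ v ∈ Y, M.sq α w v) :
    M.sq α (M.lub α X) (M.lub α Y) ∧ M.lub α X ≤ M.lub α Y :=
  M.ax3_least hα x X hX _ (M.mem_cone_trans hα.le hxy (M.lub_mem_cone hα hY)) fun w hw =>
    let ⟨v, hv, hwv⟩ := h w hw
    M.sq_trans hα hwv (M.ax3_ub hα y Y hY v hv)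

end Cone

section Pi

variable {L : Type*} [CompleteLattice L] {κ : Ordinal} (M : BasicModel L κ) {Z : Type*}

theorem image_eval_subset_cone {α : Ordinal} {x : Z → L} {X : Set (Z → L)}
    (hX : ∀ f ∈ X, ∀ β < α, (∀ z, M.sq β (x z) (f z)) ∧ ∀ z, M.sq β (f z) (x z)) (z : Z) :
    eval z '' X ⊆ M.cone α (x z) := by
  rintro _ ⟨f, hf, rfl⟩ β hβ
  exact ⟨(hX f hf β hβ).1 z, (hX f hf β hβ).2 z⟩

variable (Z) in
def pi : BasicModel (Z → L) κ where
  sq α f g := ∀ z, M.sq α (f z) (g z)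
  lub α X z := M.lub α (eval z '' X)
  sq_refl hα f z := M.sq_refl hα (f z)
  sq_trans hα _ _ _ hfg hgh z := M.sq_trans hα (hfg z) (hgh z)
  ax1 hαβ hβ _ _ h := ⟨fun z => (M.ax1 hαβ hβ (h z)).1, fun z => (M.ax1 hαβ hβ (h z)).2⟩
  ax2 h := funext fun z => M.ax2 fun α hα => ⟨(h α hα).1 z, (h α hα).2 z⟩
  ax3_ub hα x X hX f hf z :=
    M.ax3_ub hα (x z) _ (M.image_eval_subset_cone hX z) (f z) (mem_image_of_mem _ hf)
  ax3_least hα x X hX g hg hub :=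
    have h z := M.ax3_least hα (x z) _ (M.image_eval_subset_cone hX z) (g z)
      (fun β hβ => ⟨(hg β hβ).1 z, (hg β hβ).2 z⟩) (by rintro _ ⟨f, hf, rfl⟩; exact hub f hf z)
    ⟨fun z => (h z).1, fun z => (h z).2⟩
  ax4 {α} hα S hS z := by
    have h := M.ax4 hα ((fun p => (p.1 z, p.2 z)) '' S) (by rintro _ ⟨p, hp, rfl⟩; exact hS p hp z)
    simpa only [sSup_apply_eq_sSup_image, image_image] using h

end Pi

section Subtype

variable {L : Type*} [CompleteLattice L] {κ : Ordinal}

noncomputable def subtype (M : BasicModel L κ) (p : L → Prop)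
    (hsup : ∀ s : Set L, (∀ x ∈ s, p x) → p (sSup s))
    (hlub : ∀ {α}, α < κ → ∀ x, p x → ∀ X : Set L, (∀ y ∈ X, p y) → X ⊆ M.cone α x →
      p (M.lub α X)) :
    @BasicModel {x // p x} (Subtype.completeLatticeOfSSupClosed hsup) κ :=
  letI := Subtype.completeLatticeOfSSupClosed hsup
  open scoped Classical in
  { sq := fun α x y => M.sq α x y
    -- outside cones `lub` is unconstrained, so the fallback `⊥` is harmless
    lub := fun α X => if h : p (M.lub α (Subtype.val '' X)) then ⟨_, h⟩ else ⊥
    sq_refl := fun hα x => M.sq_refl hα x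
    sq_trans := fun hα => M.sq_trans hα
    ax1 := fun hαβ hβ => M.ax1 hαβ hβ
    ax2 := fun h => Subtype.ext (M.ax2 h)
    ax3_ub := by
      intro α hα x X hX y hy
      have hX' : Subtype.val '' X ⊆ M.cone α x := by rintro _ ⟨w, hw, rfl⟩; exact hX hw
      rw [dif_pos (hlub hα x x.2 _ (by rintro _ ⟨w, -, rfl⟩; exact w.2) hX')]
      exact M.ax3_ub hα x _ hX' y (mem_image_of_mem _ hy)
    ax3_least := by
      intro α hα x X hX z hz hub
      have hX' : Subtype.val '' X ⊆ M.cone α x := by rintro _ ⟨w, hw, rfl⟩; exact hX hw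
      rw [dif_pos (hlub hα x x.2 _ (by rintro _ ⟨w, -, rfl⟩; exact w.2) hX')]
      have h := M.ax3_least hα x _ hX' z hz (by rintro _ ⟨w, hw, rfl⟩; exact hub w hw)
      exact ⟨h.1, h.2⟩
    ax4 := by
      intro α hα S hS
      have h := M.ax4 hα ((fun q => (q.1.1, q.2.1)) '' S) (by rintro _ ⟨q, hq, rfl⟩; exact hS q hq)
      show M.sq α (sSup (Subtype.val '' (Prod.fst '' S))) (sSup (Subtype.val '' (Prod.snd '' S)))
      simpa only [image_image] using h }

end Subtype

section Monotonic

variable {A B : Type*} [CompleteLattice A] [CompleteLattice B] {κ : Ordinal}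
  (BA : BasicModel A κ) (BB : BasicModel B κ)

theorem monotonicAt_sSup {α : Ordinal} (hα : α < κ) {F : Set (A → B)}
    (hF : ∀ f ∈ F, MonotonicAt BA BB α f) : MonotonicAt BA BB α (sSup F) := by
  intro a b hab
  have h := BB.ax4 hα ((fun f => (f a, f b)) '' F) (by rintro _ ⟨f, hf, rfl⟩; exact hF f hf a b hab)
  simpa only [sSup_apply_eq_sSup_image, image_image] using h

theorem monotonicAt_pi_lub {α β : Ordinal} (hα : α < κ) (hβ : β < κ) {x : A → B}
    (hx : ∀ γ < α, MonotonicAt BA BB γ x) {X : Set (A → B)}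
    (hX : ∀ f ∈ X, MonotonicAt BA BB α f) (hXx : X ⊆ (BB.pi A).cone α x) :
    MonotonicAt BA BB β ((BB.pi A).lub α X) := by
  intro a b hab
  show BB.sq β (BB.lub α (eval a '' X)) (BB.lub α (eval b '' X))
  have lub_sq_lub_of_sq : ∀ {a b : A}, BA.sq α a b →
      BB.sq α (BB.lub α (eval a '' X)) (BB.lub α (eval b '' X)) ∧
        BB.lub α (eval a '' X) ≤ BB.lub α (eval b '' X) := fun {a b} hab =>
    BB.lub_sq_lub hα (BB.image_eval_subset_cone hXx a) (BB.image_eval_subset_cone hXx b)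
      (fun γ hγ => let hab' := BA.ax1 hγ hα hab; ⟨hx γ hγ a b hab'.1, hx γ hγ b a hab'.2⟩)
      (by rintro _ ⟨f, hf, rfl⟩; exact ⟨f b, mem_image_of_mem _ hf, hX f hf a b hab⟩)
  rcases lt_trichotomy β α with hβα | rfl | hαβ
  · have cone_a := BB.lub_mem_cone hα (BB.image_eval_subset_cone hXx a)
    have cone_b := BB.lub_mem_cone hα (BB.image_eval_subset_cone hXx b)
    exact BB.sq_trans hβ (cone_a β hβα).2 (BB.sq_trans hβ (hx β hβα a b hab) (cone_b β hβα).1)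
  · exact (lub_sq_lub_of_sq hab).1
  · have hab' := BA.ax1 hαβ hβ hab
    rw [le_antisymm (lub_sq_lub_of_sq hab'.1).2 (lub_sq_lub_of_sq hab'.2).2]
    exact BB.sq_refl hβ _

end Monotonic

end BasicModel

open BasicModel in
/-- the set `[A →m B]` of functions that are α-monotonic for all `α < κ`,
with pointwise `≤` and pointwise `⊑_α`, is itself a basic model. -/
theorem stmt_3 {A B : Type u} [CompleteLattice A] [CompleteLattice B] {κ : Ordinal}
    (BA : BasicModel A κ) (BB : BasicModel B κ) :
    ∃ inst : CompleteLattice {g : A → B // ∀ α < κ, MonotonicAt BA BB α g},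
      (∀ f g : {g : A → B // ∀ α < κ, MonotonicAt BA BB α g},
          (letI := inst; f ≤ g) ↔ ∀ x : A, f.1 x ≤ g.1 x) ∧
      ∃ Bm : @BasicModel {g : A → B // ∀ α < κ, MonotonicAt BA BB α g} inst κ,
        ∀ (α : Ordinal) (f g : {g : A → B // ∀ α < κ, MonotonicAt BA BB α g}),
          α < κ → (Bm.sq α f g ↔ ∀ x : A, BB.sq α (f.1 x) (g.1 x)) := by
  have hsup (F : Set (A → B)) (hF : ∀ f ∈ F, ∀ α < κ, MonotonicAt BA BB α f) :
      ∀ α < κ, MonotonicAt BA BB α (sSup F) :=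
    fun α hα => monotonicAt_sSup BA BB hα fun f hf => hF f hf α hα
  have hlub {α : Ordinal} (hα : α < κ) (x : A → B) (hx : ∀ β < κ, MonotonicAt BA BB β x)
      (X : Set (A → B)) (hX : ∀ f ∈ X, ∀ β < κ, MonotonicAt BA BB β f)
      (hXx : X ⊆ (BB.pi A).cone α x) : ∀ β < κ, MonotonicAt BA BB β ((BB.pi A).lub α X) :=
    fun β hβ => monotonicAt_pi_lub BA BB hα hβ (fun γ hγ => hx γ (hγ.trans hα))
      (fun f hf => hX f hf α hα) hXx
  exact ⟨_, fun _ _ => Iff.rfl, (BB.pi A).subtype _ hsup hlub, fun _ _ _ _ => Iff.rfl⟩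
end

section
/- If x, y are truth values in the infinite-valued domain V with x ≤ y and x =_β y for all β < α, then x ⊑_α y. -/
/-- The infinite-valued truth domain: values `F β`, `0`, `T β` for ordinals `β`. -/
inductive TV where
  | F : Ordinal → TV
  | zero : TV
  | T : Ordinal → TV

namespace TV

/-- `order x`: the order of a truth value (`∞ = ⊤` for `0`). -/
def ord : TV → WithTop Ordinal
  | F β => (β : Ordinal)
  | zero => ⊤
  | T β => (β : Ordinal)

/-- The linear order `F_0 < F_1 < ⋯ < 0 < ⋯ < T_1 < T_0` on truth values. -/
def tle : TV → TV → Prop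
  | F β, F γ => β ≤ γ
  | F _, zero => True
  | F _, T _ => True
  | zero, F _ => False
  | zero, zero => True
  | zero, T _ => True
  | T β, T γ => γ ≤ β
  | T _, F _ => False
  | T _, zero => False

/-- Membership in the truth domain `V` determined by `κ`: the order is `< κ` or the value is `0`. -/
def memV (κ : Ordinal) (x : TV) : Prop :=
  x = zero ∨ ord x < (κ : WithTop Ordinal)

/-- The relation `x ⊑_α y` on truth values. -/
def tsq (α : Ordinal) (x y : TV) : Prop :=
  (x = y ∧ ord x < (α : WithTop Ordinal)) ∨
  (x = F α ∧ (α : WithTop Ordinal) ≤ ord y) ∨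
  (y = T α ∧ (α : WithTop Ordinal) ≤ ord x) ∨
  ((α : WithTop Ordinal) < ord x ∧ (α : WithTop Ordinal) < ord y)

/-- `x =_α y`. -/
def teq (α : Ordinal) (x y : TV) : Prop :=
  tsq α x y ∧ tsq α y x

open Classical in
/-- The meet (minimum) of two truth values with respect to `tle`. -/
noncomputable def tmin (x y : TV) : TV :=
  if tle x y then x else y

/-- Negation on truth values. -/
def tneg : TV → TV
  | F β => T (β + 1)
  | zero => zero
  | T β => F (β + 1)

/-- `s` is the supremum of the set `S` of truth values with respect to `tle`. -/
def isSupTV (S : Set TV) (s : TV) : Prop :=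
  (∀ x ∈ S, tle x s) ∧ ∀ b, (∀ x ∈ S, tle x b) → tle s b

end TV

/-! If `x ≠ y`, then `x =_β y` forces both orders above `β`; holding for every `β < α`,
this puts both orders at least `α`. Among values of order at least `α`, the relation `⊑_α`
only fails for pairs `(T α, y)` with `y ≠ T α` and `(x, F α)` with `x ≠ F α`, and `x ≤ y`
excludes both. -/

theorem WithTop.coe_le_of_forall_coe_lt {ι : Type*} [LinearOrder ι] {a : ι} {b : WithTop ι}
    (h : ∀ c < a, (c : WithTop ι) < b) : (a : WithTop ι) ≤ b := by
  refine le_of_forall_lt fun c hc => ?_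
  lift c to ι using hc.ne_top
  exact h c (WithTop.coe_lt_coe.1 hc)

namespace TV

theorem tle_refl (x : TV) : tle x x := by
  cases x <;> simp [tle]

theorem tsq_of_le_ord_of_tle {α : Ordinal} {x y : TV} (hx : (α : WithTop Ordinal) ≤ ord x)
    (hy : (α : WithTop Ordinal) ≤ ord y) (hle : tle x y) : tsq α x y := by
  cases x <;> cases y <;> simp_all only [tsq, tle, ord, WithTop.coe_le_coe,
    WithTop.coe_lt_coe, le_top, WithTop.coe_lt_top, not_top_lt, F.injEq, T.injEq,
    reduceCtorEq] <;> grind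

theorem tsq_refl (α : Ordinal) (x : TV) : tsq α x x := by
  rcases lt_or_ge (ord x) α with hx | hx
  · exact Or.inl ⟨rfl, hx⟩
  · exact tsq_of_le_ord_of_tle hx hx (tle_refl x)

theorem lt_ord_of_teq_of_ne {β : Ordinal} {x y : TV} (h : teq β x y) (hne : x ≠ y) :
    (β : WithTop Ordinal) < ord x ∧ (β : WithTop Ordinal) < ord y := by
  cases x <;> cases y <;> simp_all only [teq, tsq, ord, WithTop.coe_le_coe,
    WithTop.coe_lt_coe, le_top, WithTop.coe_lt_top, not_top_lt, F.injEq, T.injEq,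
    reduceCtorEq] <;> grind

end TV

open TV in
theorem stmt_7_general {α : Ordinal} (x y : TV)
    (hle : tle x y) (heq : ∀ β < α, teq β x y) :
    tsq α x y := by
  by_cases hxy : x = y
  · exact hxy ▸ tsq_refl α x
  · have hord := fun β hβ => lt_ord_of_teq_of_ne (heq β hβ) hxy
    exact tsq_of_le_ord_of_tle (WithTop.coe_le_of_forall_coe_lt fun β hβ => (hord β hβ).1)
      (WithTop.coe_le_of_forall_coe_lt fun β hβ => (hord β hβ).2) hle

open TV in
/-- if `x ≤ y` in `V` and `x =_β y` for all `β < α`, then `x ⊑_α y`. -/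
theorem stmt_7 {κ α : Ordinal} (hα : α < κ) (x y : TV)
    (hx : memV κ x) (hy : memV κ y)
    (hle : tle x y) (heq : ∀ β < α, teq β x y) :
    tsq α x y :=
  stmt_7_general x y hle heq
end

section
/- Let L be a basic model, α ≤ κ an ordinal, and (x_β)_{β<α} a sequence in L such that x_β =_β x_γ and x_β ≤ x_γ whenever β < γ < α. Then x = ⋁_{β<α} x_β satisfies x_β =_β x for all β < α. -/
open Set

theorem sSup_image_Iio_eq_sSup_image_Ico {ι L : Type*} [LinearOrder ι] [CompleteLattice L]
    {f : ι → L} {a b : ι} (hb : b < a) (hf : ∀ c < b, f c ≤ f b) :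
    sSup (f '' Iio a) = sSup (f '' Ico b a) := by
  refine le_antisymm (sSup_le ?_) (sSup_le_sSup (image_mono Ico_subset_Iio_self))
  rintro _ ⟨c, hca, rfl⟩
  rcases le_or_gt b c with hbc | hcb
  · exact le_sSup ⟨c, ⟨hbc, hca⟩, rfl⟩
  · exact (hf c hcb).trans (le_sSup ⟨b, ⟨le_rfl, hb⟩, rfl⟩)

namespace BasicModel

variable {L : Type*} [CompleteLattice L] {κ : Ordinal} (B : BasicModel L κ)

theorem eqAt_refl {α : Ordinal} (hα : α < κ) (x : L) : B.eqAt α x x :=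
  ⟨B.sq_refl hα x, B.sq_refl hα x⟩

theorem sq_sSup_image {ι : Type*} {α : Ordinal} (hα : α < κ) {s : Set ι} {f g : ι → L}
    (h : ∀ i ∈ s, B.sq α (f i) (g i)) : B.sq α (sSup (f '' s)) (sSup (g '' s)) := by
  have := B.ax4 hα ((fun i => (f i, g i)) '' s) (by rintro _ ⟨i, hi, rfl⟩; exact h i hi)
  rwa [image_image, image_image] at this

theorem eqAt_sSup_image {ι : Type*} {α : Ordinal} (hα : α < κ) {s : Set ι} (hs : s.Nonempty)
    {a : L} {f : ι → L} (h : ∀ i ∈ s, B.eqAt α a (f i)) : B.eqAt α a (sSup (f '' s)) := by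
  have hconst : sSup ((fun _ => a) '' s) = a := by rw [hs.image_const, sSup_singleton]
  constructor
  · simpa only [hconst] using B.sq_sSup_image hα (fun i hi => (h i hi).1)
  · simpa only [hconst] using B.sq_sSup_image hα (fun i hi => (h i hi).2)

end BasicModel

open BasicModel in
/-- if `(x β)_{β<α}` is a sequence in a basic model with `x β =_β x γ` and
`x β ≤ x γ` for `β < γ < α` (where `α ≤ κ`), then `x = ⋁_{β<α} x β` satisfies
`x β =_β x` for all `β < α`. -/
theorem stmt_8 {L : Type*} [CompleteLattice L] {κ : Ordinal} (B : BasicModel L κ)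
    {α : Ordinal} (hα : α ≤ κ) (x : Ordinal → L)
    (heq : ∀ β γ : Ordinal, β < γ → γ < α → B.eqAt β (x β) (x γ))
    (hle : ∀ β γ : Ordinal, β < γ → γ < α → x β ≤ x γ) :
    ∀ β < α, B.eqAt β (x β) (sSup (x '' {β : Ordinal | β < α})) := by
  intro β hβ
  have hβκ : β < κ := hβ.trans_le hα
  rw [show {γ : Ordinal | γ < α} = Iio α from rfl,
    sSup_image_Iio_eq_sSup_image_Ico hβ (fun γ hγ => hle γ β hγ hβ)]
  refine B.eqAt_sSup_image hβκ (nonempty_Ico.mpr hβ) ?_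
  rintro γ ⟨hβγ, hγα⟩
  rcases hβγ.eq_or_lt with rfl | hβγ
  · exact B.eqAt_refl hβκ _
  · exact heq β γ hβγ hγα
end

section
/- In the infinite-valued truth domain V, arbitrary joins are α-monotonic: if x_j ⊑_α y_j for all j ∈ J, then sup_j x_j ⊑_α sup_j y_j. -/
open Set

section IccApprox

variable {X : Type*} [LinearOrder X]

def IccApprox (L U x y : X) : Prop :=
  (x = y ∧ x ∉ Icc L U) ∨ (x = L ∧ y ∈ Icc L U) ∨ (y = U ∧ x ∈ Icc L U) ∨
    (x ∈ Ioo L U ∧ y ∈ Ioo L U)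

variable {L U U' x y : X}

theorem eq_of_forall_le_iff_of_notMem_Icc (h : ∀ b, b < L ∨ U ≤ b → (x ≤ b ↔ y ≤ b))
    (hxy : x ∉ Icc L U ∨ y ∉ Icc L U) : x = y := by
  simp only [mem_Icc, not_and_or, not_le] at hxy
  rcases hxy with (hxL | hUx) | (hyL | hUy)
  · have hyx := (h x (.inl hxL)).1 le_rfl
    exact le_antisymm ((h y (.inl (by order))).2 le_rfl) hyx
  · have hxy := (h (max y U) (.inr (le_max_right _ _))).2 (le_max_left _ _)
    exact le_antisymm (by simpa [hUx.not_ge] using hxy) ((h x (.inr hUx.le)).1 le_rfl)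
  · have hxy := (h y (.inl hyL)).2 le_rfl
    exact le_antisymm hxy ((h x (.inl (by order))).1 le_rfl)
  · have hyx := (h (max x U) (.inr (le_max_right _ _))).1 (le_max_left _ _)
    exact le_antisymm ((h y (.inr hUy.le)).2 le_rfl) (by simpa [hUy.not_ge] using hyx)

theorem iccApprox_iff (hLU : L ≤ U) (hU : U' ⋖ U) :
    IccApprox L U x y ↔ (∀ b, b < L ∨ U ≤ b → (x ≤ b ↔ y ≤ b)) ∧
      (y ≤ L → x ≤ L) ∧ (y ≤ U' → x ≤ U') := by
  have := hU.lt
  constructor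
  · rintro (⟨rfl, -⟩ | ⟨rfl, hyL, hyU⟩ | ⟨rfl, hxL, hxU⟩ | ⟨⟨hxL, hxU⟩, hyL, hyU⟩)
    · exact ⟨fun _ _ => Iff.rfl, id, id⟩
    · exact ⟨fun b hb => by rcases hb with hb | hb <;> constructor <;> intro <;> order,
        fun _ => le_rfl, hyL.trans⟩
    · exact ⟨fun b hb => by rcases hb with hb | hb <;> constructor <;> intro <;> order,
        fun _ => by order, fun _ => by order⟩
    · exact ⟨fun b hb => by rcases hb with hb | hb <;> constructor <;> intro <;> order,
        fun _ => by order, fun _ => hU.le_of_lt hxU⟩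
  · rintro ⟨hout, hL, hU'⟩
    by_cases hxy : x ∉ Icc L U ∨ y ∉ Icc L U
    · have := eq_of_forall_le_iff_of_notMem_Icc hout hxy
      subst this
      exact .inl ⟨rfl, by tauto⟩
    simp only [not_or, not_not] at hxy
    obtain ⟨⟨hLx, hxU⟩, hLy, hyU⟩ := hxy
    by_cases hxL : x = L
    · exact .inr (.inl ⟨hxL, hLy, hyU⟩)
    by_cases hyU_eq : y = U
    · exact .inr (.inr (.inl ⟨hyU_eq, hLx, hxU⟩))
    have hyU_lt : y < U := lt_of_le_of_ne hyU hyU_eq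
    refine .inr (.inr (.inr ⟨⟨?_, ?_⟩, ?_, hyU_lt⟩))
    · exact lt_of_le_of_ne hLx (Ne.symm hxL)
    · exact (hU' (hU.le_of_lt hyU_lt)).trans_lt hU.lt
    · exact lt_of_le_of_ne hLy fun h => hxL (le_antisymm (hL h.ge) hLx)

theorem IsLUB.le_of_forall_le_imp {ι : Type*} {f g : ι → X} {a c b : X}
    (hf : IsLUB (range f) a) (hg : IsLUB (range g) c) (h : ∀ i, f i ≤ b → g i ≤ b) (ha : a ≤ b) : c ≤ b :=
  hg.2 <| forall_mem_range.2 fun i => h i ((hf.1 (mem_range_self i)).trans ha)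

theorem IccApprox.isLUB_range (hLU : L ≤ U) (hU : U' ⋖ U) {ι : Type*} {f g : ι → X} {a c : X}
    (hf : IsLUB (range f) a) (hg : IsLUB (range g) c) (h : ∀ i, IccApprox L U (f i) (g i)) :
    IccApprox L U a c := by
  simp only [iccApprox_iff hLU hU] at h ⊢
  refine ⟨fun b hb => ⟨hf.le_of_forall_le_imp hg fun i => ((h i).1 b hb).1,
    hg.le_of_forall_le_imp hf fun i => ((h i).1 b hb).2⟩,
    hg.le_of_forall_le_imp hf fun i => (h i).2.1, hg.le_of_forall_le_imp hf fun i => (h i).2.2⟩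

end IccApprox

namespace TV

noncomputable instance : LinearOrder TV where
  le := tle
  le_refl := by rintro (_ | _ | _) <;> simp [tle]
  le_trans := by
    rintro (_ | _ | _) (_ | _ | _) (_ | _ | _) <;> simp only [tle] <;> intros <;>
      first | trivial | contradiction | order
  le_antisymm := by
    rintro (_ | _ | _) (_ | _ | _) <;> simp only [tle] <;> intros <;>
      first | contradiction | rfl | (congr 1 <;> order)
  le_total := by
    rintro (_ | _ | _) (_ | _ | _) <;> simp only [tle] <;> first | trivial | exact le_total _ _
  toDecidableLE := Classical.decRel _

theorem le_def {x y : TV} : x ≤ y ↔ tle x y := Iff.rfl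

theorem lt_def {x y : TV} : x < y ↔ ¬tle y x := lt_iff_not_ge

theorem isSupTV_iff_isLUB {S : Set TV} {s : TV} : isSupTV S s ↔ IsLUB S s := Iff.rfl

theorem ord_lt_iff {α : Ordinal} {z : TV} :
    ord z < (α : WithTop Ordinal) ↔ z ∉ Icc (F α) (T α) := by
  cases z <;> simp [ord, le_def, tle]

theorem le_ord_iff {α : Ordinal} {z : TV} :
    (α : WithTop Ordinal) ≤ ord z ↔ z ∈ Icc (F α) (T α) := by
  rw [← not_lt, ord_lt_iff, not_not]

theorem lt_ord_iff {α : Ordinal} {z : TV} :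
    (α : WithTop Ordinal) < ord z ↔ z ∈ Ioo (F α) (T α) := by
  cases z <;> simp [ord, lt_def, tle]

theorem tsq_iff_iccApprox {α : Ordinal} {x y : TV} : tsq α x y ↔ IccApprox (F α) (T α) x y := by
  simp only [tsq, IccApprox, ord_lt_iff, le_ord_iff, lt_ord_iff]

theorem T_succ_covBy (α : Ordinal) : T (α + 1) ⋖ T α := by
  refine ⟨by simp [lt_def, tle], fun z h1 h2 => ?_⟩
  cases z <;> simp_all [lt_def, tle]

end TV

open TV in
theorem stmt_11_general {α : Ordinal} {J : Type*} (x y : J → TV)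
    (sx sy : TV) (hsx : isSupTV (Set.range x) sx) (hsy : isSupTV (Set.range y) sy)
    (h : ∀ j, tsq α (x j) (y j)) :
    tsq α sx sy := by
  simp only [tsq_iff_iccApprox] at h ⊢
  exact IccApprox.isLUB_range (show F α ≤ T α from trivial) (T_succ_covBy α)
    (isSupTV_iff_isLUB.1 hsx) (isSupTV_iff_isLUB.1 hsy) h

open TV in
/-- arbitrary joins in the truth domain `V` are α-monotonic:
if `x j ⊑_α y j` for all `j` then `sup x ⊑_α sup y`. -/
theorem stmt_11 {κ α : Ordinal} (hα : α < κ) {J : Type*} (x y : J → TV)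
    (hx : ∀ j, memV κ (x j)) (hy : ∀ j, memV κ (y j))
    (sx sy : TV) (hsx : isSupTV (Set.range x) sx) (hsy : isSupTV (Set.range y) sy)
    (h : ∀ j, tsq α (x j) (y j)) :
    tsq α sx sy :=
  stmt_11_general x y sx sy hsx hsy h
end
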